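/- Let (Γ,α) be a 3-valent abstract GKM graph with labels in ℤ^2 that is not orientable. Then for every vertex v, the Thom class Th_v vanishes in the top degree graph cohomology H^{2n}(Γ,α;ℚ) (n = valence = 3, top degree 6). Consequently, if H*(Γ,α;ℚ) satisfies 6-dimensional Poincaré duality, then (Γ,α) is orientable. -/

import Mathlib

open MvPolynomial Finset

noncomputable section

/-- Rational equivariant graph cohomology for a graph with oriented edges. -/
def gkmCohom8 {V E : Type} (src tgt : E → V) (w : E → MvPolynomial (Fin 2) ℚ) :
    Submodule (MvPolynomial (Fin 2) ℚ) (V → MvPolynomial (Fin 2) ℚ) where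
  carrier := {f | ∀ e : E, w e ∣ f (src e) - f (tgt e)}
  add_mem' := by
    intro f g hf hg e
    have h := dvd_add (hf e) (hg e)
    simpa [add_sub_add_comm] using h
  zero_mem' := by intro e; simp
  smul_mem' := by
    intro r f hf e
    have h := (hf e).mul_left r
    simpa [Pi.smul_apply, smul_eq_mul, mul_sub] using h

/-- The finset of edges at a vertex `v`. -/
def edgesAt8 {V E : Type} [Fintype E] [DecidableEq V] (src tgt : E → V) (v : V) :
    Finset E :=
  Finset.univ.filter fun g => src g = v ∨ tgt g = v

/-- `R⁺·H*_T(Γ,α;ℚ)`; a class vanishes in `H*(Γ,α;ℚ)` iff it lies in this submodule. -/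
def RplusH8 {V E : Type} (src tgt : E → V) (w : E → MvPolynomial (Fin 2) ℚ) :
    Submodule (MvPolynomial (Fin 2) ℚ) (V → MvPolynomial (Fin 2) ℚ) :=
  (Ideal.span (Set.range (X : Fin 2 → MvPolynomial (Fin 2) ℚ))) • gkmCohom8 src tgt w

/-- The Thom class of a vertex `v` with respect to the sign choice `s`. -/
def vThom8 {V E : Type} [Fintype E] [DecidableEq V] (src tgt : E → V)
    (w : E → MvPolynomial (Fin 2) ℚ) (s : E → ℤˣ) (v : V) :
    V → MvPolynomial (Fin 2) ℚ :=
  fun u => if u = v then ∏ g ∈ edgesAt8 src tgt v, ((s g : ℤ) • w g) else 0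

/-- Closed edge path condition: the cyclic vertex sequence `vs` realizes the cyclic edge
sequence `es`. -/
def pathCond8 {V E : Type} (src tgt : E → V) {m : ℕ}
    (es : Fin (m+1) → E) (vs : Fin (m+1) → V) : Prop :=
  ∀ i, (src (es i) = vs i ∧ tgt (es i) = vs (i+1)) ∨
    (src (es i) = vs (i+1) ∧ tgt (es i) = vs i)

/-- Orientability condition for a sign choice `s`: the product of `η` over every closed
edge path equals `1`. -/
def orientCond8 {V E : Type} (src tgt : E → V)
    (η : (E → ℤˣ) → E → ℤˣ) (s : E → ℤˣ) : Prop :=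
  ∀ (m : ℕ) (es : Fin (m+1) → E) (vs : Fin (m+1) → V),
    pathCond8 src tgt es vs → ∏ i, η s (es i) = 1

/-- The degree-`2n` part of `H*_T(Γ,α;ℚ)`. -/
def gkmGr8 {V E : Type} (src tgt : E → V) (w : E → MvPolynomial (Fin 2) ℚ) (n : ℕ) :
    Set (V → MvPolynomial (Fin 2) ℚ) :=
  {f | f ∈ gkmCohom8 src tgt w ∧ ∀ u, (f u).IsHomogeneous n}

namespace Stmt8Aux


abbrev P2 : Type := MvPolynomial (Fin 2) ℚ

lemma split0 (p : P2) : ∃ A B : P2, ∃ c : ℚ, p = X 0 * A + X 1 * B + C c := by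
  induction p using MvPolynomial.induction_on with
  | C a => exact ⟨0, 0, a, by ring⟩
  | add p q hp hq =>
    obtain ⟨A, B, c, hp⟩ := hp
    obtain ⟨A', B', c', hq⟩ := hq
    refine ⟨A + A', B + B', c + c', ?_⟩
    rw [hp, hq, map_add]; ring
  | mul_X p i _ =>
    fin_cases i
    · refine ⟨p, 0, 0, ?_⟩
      show p * X 0 = X 0 * p + X 1 * 0 + C 0
      rw [map_zero]; ring
    · refine ⟨0, p, 0, ?_⟩
      show p * X 1 = X 0 * 0 + X 1 * p + C 0
      rw [map_zero]; ring

lemma hc_of_homog {p : P2} {n : ℕ} (h : p.IsHomogeneous n) (k : ℕ) :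
    homogeneousComponent k p = if k = n then p else 0 :=
  homogeneousComponent_of_mem ((mem_homogeneousSubmodule n p).mpr h)

lemma hc_X_mul (i : Fin 2) (A : P2) (n : ℕ) :
    homogeneousComponent (n + 1) (X i * A) = X i * homogeneousComponent n A := by
  conv_lhs => rw [show X i * A
      = ∑ k ∈ Finset.range (A.totalDegree + 1), X i * homogeneousComponent k A by
    rw [← Finset.mul_sum, sum_homogeneousComponent]]
  rw [map_sum]
  have hterm : ∀ k : ℕ, homogeneousComponent (n + 1) (X i * homogeneousComponent k A)
      = if n = k then X i * homogeneousComponent k A else 0 := by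
    intro k
    have hh : (X i * homogeneousComponent k A).IsHomogeneous (1 + k) :=
      (isHomogeneous_X ℚ i).mul (homogeneousComponent_isHomogeneous k A)
    rw [hc_of_homog hh]
    exact if_congr (by omega) rfl rfl
  simp only [hterm]
  rw [Finset.sum_ite_eq]
  by_cases hn : n ∈ Finset.range (A.totalDegree + 1)
  · rw [if_pos hn]
  · rw [if_neg hn, homogeneousComponent_eq_zero, mul_zero]
    simp only [Finset.mem_range] at hn
    omega

lemma hsplit {p : P2} {n : ℕ} (h : p.IsHomogeneous (n + 1)) :
    ∃ A B : P2, A.IsHomogeneous n ∧ B.IsHomogeneous n ∧ p = X 0 * A + X 1 * B := by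
  obtain ⟨A, B, c, hp⟩ := split0 p
  refine ⟨homogeneousComponent n A, homogeneousComponent n B,
    homogeneousComponent_isHomogeneous _ _, homogeneousComponent_isHomogeneous _ _, ?_⟩
  have h2 := congrArg (homogeneousComponent (n + 1)) hp
  rw [hc_of_homog h, if_pos rfl, map_add, map_add, hc_X_mul, hc_X_mul,
    hc_of_homog (isHomogeneous_C _ c), if_neg (Nat.succ_ne_zero n), add_zero] at h2
  exact h2

lemma homog0 {p : P2} (h : p.IsHomogeneous 0) : ∃ c : ℚ, p = C c := by
  have h2 := hc_of_homog h 0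
  rw [if_pos rfl, homogeneousComponent_zero] at h2
  exact ⟨coeff 0 p, h2.symm⟩

lemma homog_succ_mem {p : P2} {n : ℕ} (h : p.IsHomogeneous (n + 1)) :
    p ∈ Ideal.span (Set.range (X : Fin 2 → P2)) := by
  obtain ⟨A, B, _, _, rfl⟩ := hsplit h
  have h0 : (X 0 : P2) ∈ Ideal.span (Set.range (X : Fin 2 → P2)) :=
    Ideal.subset_span ⟨0, rfl⟩
  have h1 : (X 1 : P2) ∈ Ideal.span (Set.range (X : Fin 2 → P2)) :=
    Ideal.subset_span ⟨1, rfl⟩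
  exact add_mem (Ideal.mul_mem_right _ _ h0) (Ideal.mul_mem_right _ _ h1)

lemma div_homog {z d : P2} {N m : ℕ} (hz : z.IsHomogeneous N) (hd : d.IsHomogeneous m)
    (hdvd : d ∣ z) : ∃ t : P2, t.IsHomogeneous (N - m) ∧ z = d * t := by
  obtain ⟨t0, rfl⟩ := hdvd
  by_cases h0 : d * t0 = 0
  · exact ⟨0, isHomogeneous_zero _ _ _, by rw [h0, mul_zero]⟩
  have hsum : d * t0 = ∑ k ∈ Finset.range (t0.totalDegree + 1), d * homogeneousComponent k t0 := by
    rw [← Finset.mul_sum, sum_homogeneousComponent]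
  have h2 := congrArg (homogeneousComponent N) hsum
  rw [hc_of_homog hz, if_pos rfl, map_sum] at h2
  by_cases hmN : m ≤ N
  · have hterm : ∀ k : ℕ, homogeneousComponent N (d * homogeneousComponent k t0)
        = if N - m = k then d * homogeneousComponent k t0 else 0 := by
      intro k
      rw [hc_of_homog (hd.mul (homogeneousComponent_isHomogeneous k t0))]
      exact if_congr (by omega) rfl rfl
    simp only [hterm] at h2
    rw [Finset.sum_ite_eq] at h2
    by_cases hin : N - m ∈ Finset.range (t0.totalDegree + 1)
    · rw [if_pos hin] at h2
      exact ⟨homogeneousComponent (N - m) t0, homogeneousComponent_isHomogeneous _ _, h2⟩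
    · rw [if_neg hin] at h2
      exact absurd h2 h0
  · have hterm : ∀ k ∈ Finset.range (t0.totalDegree + 1),
        homogeneousComponent N (d * homogeneousComponent k t0) = 0 := by
      intro k _
      rw [hc_of_homog (hd.mul (homogeneousComponent_isHomogeneous k t0)), if_neg (by omega)]
    rw [Finset.sum_congr rfl hterm, Finset.sum_const, smul_zero] at h2
    exact absurd h2 h0

lemma linform {p : P2} (h : p.IsHomogeneous 1) : ∃ a b : ℚ, p = C a * X 0 + C b * X 1 := by
  obtain ⟨A, B, hA, hB, hp⟩ := hsplit (n := 0) h
  obtain ⟨a, rfl⟩ := homog0 hA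
  obtain ⟨b, rfl⟩ := homog0 hB
  exact ⟨a, b, by rw [hp]; ring⟩

lemma comb (c d α₁ α₂ β₁ β₂ : ℚ) :
    C c * (C α₁ * X 0 + C α₂ * X 1) + C d * (C β₁ * X 0 + C β₂ * X 1)
      = (C (c * α₁ + d * β₁) * X 0 + C (c * α₂ + d * β₂) * X 1 : P2) := by
  simp only [C_add, C_mul]; ring

lemma pair_equiv {wa wb : P2} (ha : wa.IsHomogeneous 1) (hb : wb.IsHomogeneous 1)
    (hind : ∀ c d : ℚ, C c * wa + C d * wb = 0 → c = 0 ∧ d = 0) :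
    ∃ (χ ψ : P2 →ₐ[ℚ] P2), (∀ z, ψ (χ z) = z) ∧ χ wa = X 0 ∧ χ wb = X 1 ∧
      ψ (X 0) = wa ∧ ψ (X 1) = wb ∧
      (∃ γ₁ γ₂ δ₁ δ₂ : ℚ, (X 0 : P2) = C γ₁ * wa + C γ₂ * wb ∧
        (X 1 : P2) = C δ₁ * wa + C δ₂ * wb) := by
  obtain ⟨a₀, a₁, hwa⟩ := linform ha
  obtain ⟨b₀, b₁, hwb⟩ := linform hb
  have hD0 : a₀ * b₁ - a₁ * b₀ ≠ 0 := by
    intro hD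
    have e1 : C b₁ * wa + C (-a₁) * wb = (0 : P2) := by
      rw [hwa, hwb, comb, show b₁ * a₀ + -a₁ * b₀ = 0 by linear_combination hD,
        show b₁ * a₁ + -a₁ * b₁ = 0 by ring]
      simp
    obtain ⟨hb₁, ha₁⟩ := hind _ _ e1
    have e2 : C b₀ * wa + C (-a₀) * wb = (0 : P2) := by
      rw [hwa, hwb, comb, show b₀ * a₀ + -a₀ * b₀ = 0 by ring,
        show b₀ * a₁ + -a₀ * b₁ = 0 by linear_combination -hD]
      simp
    obtain ⟨hb₀, ha₀⟩ := hind _ _ e2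
    have e3 : C (1 : ℚ) * wa + C (0 : ℚ) * wb = (0 : P2) := by
      rw [hwa, hwb, comb, show (1:ℚ) * a₀ + 0 * b₀ = 0 by linarith,
        show (1:ℚ) * a₁ + 0 * b₁ = 0 by linarith]
      simp
    exact one_ne_zero (hind _ _ e3).1
  set D : ℚ := a₀ * b₁ - a₁ * b₀ with hDdef
  have hX0ab : (X 0 : P2) = C (b₁ / D) * wa + C (-(a₁ / D)) * wb := by
    rw [hwa, hwb, comb, show b₁ / D * a₀ + -(a₁ / D) * b₀ = 1 by
        field_simp; rw [hDdef]; ring, show b₁ / D * a₁ + -(a₁ / D) * b₁ = 0 by field_simp; ring]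
    simp
  have hX1ab : (X 1 : P2) = C (-(b₀ / D)) * wa + C (a₀ / D) * wb := by
    rw [hwa, hwb, comb, show -(b₀ / D) * a₀ + a₀ / D * b₀ = 0 by field_simp; ring,
      show -(b₀ / D) * a₁ + a₀ / D * b₁ = 1 by field_simp; rw [hDdef]; ring]
    simp
  refine ⟨aeval ![C (b₁ / D) * X 0 + C (-(a₁ / D)) * X 1,
                  C (-(b₀ / D)) * X 0 + C (a₀ / D) * X 1],
          aeval ![wa, wb], ?_, ?_, ?_, by simp, by simp,
          ⟨b₁ / D, -(a₁ / D), -(b₀ / D), a₀ / D, hX0ab, hX1ab⟩⟩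
  · -- ψ ∘ χ = id
    set χ : P2 →ₐ[ℚ] P2 := aeval ![C (b₁ / D) * X 0 + C (-(a₁ / D)) * X 1,
                  C (-(b₀ / D)) * X 0 + C (a₀ / D) * X 1] with hχ
    set ψ : P2 →ₐ[ℚ] P2 := aeval ![wa, wb] with hψ
    have hcomp : ψ.comp χ = AlgHom.id ℚ P2 := by
      apply MvPolynomial.algHom_ext
      intro i
      fin_cases i
      · show ψ (χ (X 0)) = X 0
        rw [hχ]
        simp only [aeval_X, Matrix.cons_val_zero]
        rw [map_add, map_mul, map_mul, hψ]
        simp only [aeval_X, Matrix.cons_val_zero, Matrix.cons_val_one, Matrix.head_cons,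
          aeval_C, algebraMap_eq]
        rw [← hX0ab]
      · show ψ (χ (X 1)) = X 1
        rw [hχ]
        simp only [aeval_X, Matrix.cons_val_one, Matrix.head_cons, Matrix.cons_val_zero]
        rw [map_add, map_mul, map_mul, hψ]
        simp only [aeval_X, Matrix.cons_val_zero, Matrix.cons_val_one, Matrix.head_cons,
          aeval_C, algebraMap_eq]
        rw [← hX1ab]
    intro z
    have := DFunLike.congr_fun hcomp z
    simpa using this
  · -- χ wa = X 0
    rw [hwa, map_add, map_mul, map_mul]
    simp only [aeval_X, Matrix.cons_val_zero, Matrix.cons_val_one, Matrix.head_cons,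
      aeval_C, algebraMap_eq]
    rw [comb, show a₀ * (b₁ / D) + a₁ * (-(b₀ / D)) = 1 by field_simp; rw [hDdef]; ring,
      show a₀ * (-(a₁ / D)) + a₁ * (a₀ / D) = 0 by field_simp; ring]
    simp
  · -- χ wb = X 1
    rw [hwb, map_add, map_mul, map_mul]
    simp only [aeval_X, Matrix.cons_val_zero, Matrix.cons_val_one, Matrix.head_cons,
      aeval_C, algebraMap_eq]
    rw [comb, show b₀ * (b₁ / D) + b₁ * (-(b₀ / D)) = 0 by field_simp; ring,
      show b₀ * (-(a₁ / D)) + b₁ * (a₀ / D) = 1 by field_simp; rw [hDdef]; ring]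
    simp

lemma not_dvd_ind {wa wb : P2} (ha : wa.IsHomogeneous 1) (hb : wb.IsHomogeneous 1)
    (hind : ∀ c d : ℚ, C c * wa + C d * wb = 0 → c = 0 ∧ d = 0) : ¬ wa ∣ wb := by
  intro hdvd
  obtain ⟨t, ht, hbt⟩ := div_homog hb ha hdvd
  obtain ⟨μ, rfl⟩ := homog0 (by simpa using ht)
  have hCm : (C (-1 : ℚ) : P2) = -1 := by simp
  have hz : C μ * wa + C (-1 : ℚ) * wb = 0 := by rw [hbt, hCm]; ring
  exact absurd (hind _ _ hz).2 (by norm_num)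

lemma primeX0 : Prime (X 0 : P2) := by
  rw [← MulEquiv.prime_iff (MvPolynomial.finSuccEquiv ℚ 1).toMulEquiv]
  have h : (MvPolynomial.finSuccEquiv ℚ 1).toMulEquiv (X 0 : P2) = Polynomial.X := by
    show (MvPolynomial.finSuccEquiv ℚ 1) (X 0 : P2) = Polynomial.X
    exact finSuccEquiv_X_zero
  rw [h]
  exact Polynomial.prime_X

lemma primeX1 : Prime (X 1 : P2) := by
  rw [← MulEquiv.prime_iff (renameEquiv ℚ (Equiv.swap (0 : Fin 2) 1)).toMulEquiv]
  have h : (renameEquiv ℚ (Equiv.swap (0 : Fin 2) 1)).toMulEquiv (X 1 : P2) = (X 0 : P2) := by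
    show (renameEquiv ℚ (Equiv.swap (0 : Fin 2) 1)) (X 1 : P2) = (X 0 : P2)
    simp [renameEquiv_apply, rename_X]
  rw [h]
  exact primeX0

lemma pull_dvd {χ ψ : P2 →ₐ[ℚ] P2} (hid : ∀ z, ψ (χ z) = z) {p q : P2}
    (h : χ p ∣ χ q) : p ∣ q := by
  obtain ⟨k, hk⟩ := h
  exact ⟨ψ k, by rw [← hid q, hk, map_mul, hid p]⟩

lemma dvd_pair {wa wb z : P2} (ha : wa.IsHomogeneous 1) (hb : wb.IsHomogeneous 1)
    (hind : ∀ c d : ℚ, C c * wa + C d * wb = 0 → c = 0 ∧ d = 0)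
    (h1 : wa ∣ z) (h2 : wb ∣ z) : wa * wb ∣ z := by
  obtain ⟨χ, ψ, hid, hχa, hχb, hψ0, hψ1, -⟩ := pair_equiv ha hb hind
  have d1 : (X 0 : P2) ∣ χ z := hχa ▸ map_dvd χ h1
  have d2 : (X 1 : P2) ∣ χ z := hχb ▸ map_dvd χ h2
  obtain ⟨r, hr⟩ := d1
  have hX10 : ¬ (X 1 : P2) ∣ (X 0 : P2) := by
    intro hd
    have hba : wb ∣ wa := pull_dvd hid (by rw [hχa, hχb]; exact hd)
    exact not_dvd_ind hb ha
      (fun c d h => ⟨(hind d c (by linear_combination h)).2,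
                     (hind d c (by linear_combination h)).1⟩) hba
  have hd2 : (X 1 : P2) ∣ r := by
    rcases (primeX1.2.2 _ _ (show (X 1 : P2) ∣ X 0 * r by rw [← hr]; exact d2)) with h | h
    · exact absurd h hX10
    · exact h
  obtain ⟨s, hs⟩ := hd2
  refine ⟨ψ s, ?_⟩
  have hz : z = wa * (wb * ψ s) := by
    rw [← hid z, hr, hs, map_mul, map_mul, hψ0, hψ1]
  rw [hz]; ring

lemma dvd_triple {wa wb wc z : P2}
    (ha : wa.IsHomogeneous 1) (hb : wb.IsHomogeneous 1) (hc : wc.IsHomogeneous 1)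
    (hab : ∀ c d : ℚ, C c * wa + C d * wb = 0 → c = 0 ∧ d = 0)
    (hca : ∀ c d : ℚ, C c * wc + C d * wa = 0 → c = 0 ∧ d = 0)
    (hcb : ∀ c d : ℚ, C c * wc + C d * wb = 0 → c = 0 ∧ d = 0)
    (h1 : wa ∣ z) (h2 : wb ∣ z) (h3 : wc ∣ z) : wa * wb * wc ∣ z := by
  obtain ⟨q, hq⟩ := dvd_pair ha hb hab h1 h2
  obtain ⟨χ, ψ, hid, hχc, hχa, hψ0, hψ1, -⟩ := pair_equiv hc ha hca
  have hd : (X 0 : P2) ∣ χ z := hχc ▸ map_dvd χ h3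
  rw [hq, map_mul, map_mul, hχa] at hd
  have hnca : ¬ (X 0 : P2) ∣ (X 1 : P2) := by
    intro hdd
    exact not_dvd_ind hc ha hca (pull_dvd hid (by rw [hχc, hχa]; exact hdd))
  have hncb : ¬ (X 0 : P2) ∣ χ wb := by
    intro hdd
    exact not_dvd_ind hc hb hcb (pull_dvd hid (by rw [hχc]; exact hdd))
  have hXq : (X 0 : P2) ∣ χ q := by
    rcases primeX0.2.2 _ _ hd with h | h
    · rcases primeX0.2.2 _ _ h with h' | h'
      · exact absurd h' hnca
      · exact absurd h' hncb
    · exact h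
  obtain ⟨q', hq'⟩ := pull_dvd hid (show χ wc ∣ χ q by rw [hχc]; exact hXq)
  exact ⟨q', by rw [hq, hq']; ring⟩


section Graph

variable {V E : Type} [Fintype V] [Fintype E] [DecidableEq V] [DecidableEq E]
variable (src tgt : E → V) (w : E → P2)

lemma mem_edgesAt {g : E} {v : V} : g ∈ edgesAt8 src tgt v ↔ (src g = v ∨ tgt g = v) := by
  simp [edgesAt8]

lemma zsmul_mem'' (S : Submodule P2 (V → P2)) (k : ℤ) {x : V → P2}
    (h : x ∈ S) : k • x ∈ S := by
  rw [← Int.cast_smul_eq_zsmul P2]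
  exact S.smul_mem _ h

lemma flip_mem {S : Submodule P2 (V → P2)} {A B : V → P2} {e : ℤˣ}
    (h : A - ((e : ℤ)) • B ∈ S) : B - ((e : ℤ)) • A ∈ S := by
  have h2 := zsmul_mem'' S (-(e : ℤ)) h
  have he : (e : ℤ) * (e : ℤ) = 1 := by
    rcases Int.units_eq_one_or e with h' | h' <;> simp [h']
  have heq : B - (e : ℤ) • A = (-(e : ℤ)) • (A - (e : ℤ) • B) := by
    rw [smul_sub, smul_smul, neg_mul, he, neg_smul, neg_smul, one_smul, sub_neg_eq_add]
    abel
  rw [heq]; exact h2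

lemma vThom_one_apply (v x : V) :
    vThom8 src tgt w (fun _ => 1) v x
      = if x = v then ∏ g ∈ edgesAt8 src tgt v, w g else 0 := by
  simp [vThom8]

lemma cross_lemma {Sf : Finset V}
    (hconn : ∀ a b : V, Relation.ReflTransGen
      (fun x y => ∃ e, (src e = x ∧ tgt e = y) ∨ (src e = y ∧ tgt e = x)) a b)
    (ha : ∃ a, a ∈ Sf) (hb : ∃ b, b ∉ Sf) :
    ∃ (e : E) (u : V), u ∉ Sf ∧
      ((src e = u ∧ tgt e ∈ Sf) ∨ (tgt e = u ∧ src e ∈ Sf)) := by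
  obtain ⟨a, haS⟩ := ha
  obtain ⟨b, hbS⟩ := hb
  have H : ∀ x, Relation.ReflTransGen
      (fun x y => ∃ e, (src e = x ∧ tgt e = y) ∨ (src e = y ∧ tgt e = x)) x b →
      x ∈ Sf → ∃ (e : E) (u : V), u ∉ Sf ∧
      ((src e = u ∧ tgt e ∈ Sf) ∨ (tgt e = u ∧ src e ∈ Sf)) := by
    intro x h
    induction h using Relation.ReflTransGen.head_induction_on with
    | refl => exact fun hx => absurd hx hbS
    | @head x' c h' htail IH =>
      intro hx
      by_cases hc : c ∈ Sf
      · exact IH hc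
      · obtain ⟨e, he⟩ := h'
        rcases he with ⟨h1, h2⟩ | ⟨h1, h2⟩
        · exact ⟨e, c, hc, Or.inr ⟨h2, by rw [h1]; exact hx⟩⟩
        · exact ⟨e, c, hc, Or.inl ⟨h1, by rw [h2]; exact hx⟩⟩
  exact H a (hconn a b) haS

lemma kill
    (hst : ∀ e : E, src e ≠ tgt e)
    (hhom : ∀ e, (w e).IsHomogeneous 1)
    (hval : ∀ v, (edgesAt8 src tgt v).card = 3)
    (hindep : ∀ (v : V) (e f : E), e ∈ edgesAt8 src tgt v → f ∈ edgesAt8 src tgt v →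
      e ≠ f → ∀ c d : ℚ, C c * w e + C d * w f = 0 → c = 0 ∧ d = 0)
    (hconn : ∀ a b : V, Relation.ReflTransGen
      (fun x y => ∃ e, (src e = x ∧ tgt e = y) ∨ (src e = y ∧ tgt e = x)) a b)
    (Th : E → V → P2)
    (hThH : ∀ e, Th e ∈ gkmCohom8 src tgt w)
    (hThsupp : ∀ e u, u ≠ src e → u ≠ tgt e → Th e u = 0)
    (hThval : ∀ e u, u = src e ∨ u = tgt e → ∃ c : ℚ, c ≠ 0 ∧
      Th e u = C c * ∏ g ∈ (edgesAt8 src tgt u).erase e, w g)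
    (hThhom : ∀ e u, (Th e u).IsHomogeneous 2)
    (hT : ∀ v, vThom8 src tgt w (fun _ => 1) v ∈ RplusH8 src tgt w) :
    ∀ F, F ∈ gkmCohom8 src tgt w → (∀ u, (F u).IsHomogeneous 3) →
      F ∈ RplusH8 src tgt w := by
  classical
  have hSN : RplusH8 src tgt w ≤ gkmCohom8 src tgt w := Submodule.smul_le_right
  have hprodv : ∀ v : V, (∏ g ∈ edgesAt8 src tgt v, w g).IsHomogeneous 3 := by
    intro v
    have h := MvPolynomial.IsHomogeneous.prod (edgesAt8 src tgt v) (fun g => w g) (fun _ => 1)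
      (fun g _ => hhom g)
    rw [Finset.sum_const, hval v, smul_eq_mul, mul_one] at h
    exact h
  have main : ∀ (n : ℕ) (Sf : Finset V), (Finset.univ \ Sf).card = n → Sf.Nonempty →
      ∀ G, G ∈ gkmCohom8 src tgt w → (∀ u, (G u).IsHomogeneous 3) →
      (∀ v ∈ Sf, G v = 0) → G ∈ RplusH8 src tgt w := by
    intro n
    induction n using Nat.strong_induction_on with
    | _ n IH =>
    intro Sf hcard hSne G hGc hGh hGz
    by_cases hfull : (Finset.univ \ Sf : Finset V) = ∅
    · have hGzero : G = 0 := by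
        funext v
        by_cases hv : v ∈ Sf
        · exact hGz v hv
        · exact absurd (Finset.mem_sdiff.mpr ⟨Finset.mem_univ v, hv⟩)
            (by rw [hfull]; exact Finset.notMem_empty v)
      rw [hGzero]; exact Submodule.zero_mem _
    · obtain ⟨x0, hx0⟩ := Finset.nonempty_iff_ne_empty.mpr hfull
      obtain ⟨estar, u, hu, hcases⟩ := cross_lemma src tgt hconn
        ⟨hSne.choose, hSne.choose_spec⟩ ⟨x0, (Finset.mem_sdiff.mp hx0).2⟩
      set B : Finset E := (edgesAt8 src tgt u).filter
        (fun g => (if src g = u then tgt g else src g) ∈ Sf) with hBdef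
      have hBsub : B ⊆ edgesAt8 src tgt u := Finset.filter_subset _ _
      have hBne : B.Nonempty := by
        rcases hcases with ⟨h1, h2⟩ | ⟨h1, h2⟩
        · refine ⟨estar, Finset.mem_filter.mpr ⟨(mem_edgesAt src tgt).mpr (Or.inl h1), ?_⟩⟩
          rw [if_pos h1]; exact h2
        · refine ⟨estar, Finset.mem_filter.mpr ⟨(mem_edgesAt src tgt).mpr (Or.inr h1), ?_⟩⟩
          have hne : src estar ≠ u := fun hh => hu (by rw [← hh]; exact h2)
          rw [if_neg hne]; exact h2
      have hdvdB : ∀ g ∈ B, w g ∣ G u := by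
        intro g hgB
        have hg := hBsub hgB
        have hgS := (Finset.mem_filter.mp hgB).2
        by_cases hsg : src g = u
        · rw [if_pos hsg] at hgS
          have hdd := hGc g
          rw [hsg, hGz _ hgS, sub_zero] at hdd
          exact hdd
        · rw [if_neg hsg] at hgS
          have htg : tgt g = u := by
            rcases (mem_edgesAt src tgt).mp hg with h | h
            · exact absurd h hsg
            · exact h
          have hdd := hGc g
          rw [htg, hGz _ hgS, zero_sub, dvd_neg] at hdd
          exact hdd
      have hThzS : ∀ g, g ∈ edgesAt8 src tgt u → g ∉ B → ∀ s', s' ∈ Sf → Th g s' = 0 := by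
        intro g hg hgB s' hs'
        have hgnS : (if src g = u then tgt g else src g) ∉ Sf :=
          fun hcon => hgB (Finset.mem_filter.mpr ⟨hg, hcon⟩)
        by_cases hsg : src g = u
        · rw [if_pos hsg] at hgnS
          refine hThsupp g s' ?_ ?_
          · rw [hsg]; exact fun hh => hu (by rw [← hh]; exact hs')
          · exact fun hh => hgnS (by rw [← hh]; exact hs')
        · rw [if_neg hsg] at hgnS
          have htg : tgt g = u := by
            rcases (mem_edgesAt src tgt).mp hg with h | h
            · exact absurd h hsg
            · exact h
          refine hThsupp g s' ?_ ?_
          · exact fun hh => hgnS (by rw [← hh]; exact hs')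
          · rw [htg]; exact fun hh => hu (by rw [← hh]; exact hs')
      have hmemE : ∀ g, g ∈ edgesAt8 src tgt u → u = src g ∨ u = tgt g := by
        intro g hg
        rcases (mem_edgesAt src tgt).mp hg with h | h
        · exact Or.inl h.symm
        · exact Or.inr h.symm
      suffices hΔ : ∃ Δ : V → P2, Δ ∈ RplusH8 src tgt w ∧ (∀ x, (Δ x).IsHomogeneous 3) ∧
          (∀ s', s' ∈ Sf → Δ s' = 0) ∧ Δ u = G u by
        obtain ⟨Δ, hΔS, hΔh, hΔz, hΔu⟩ := hΔ
        have hGle : G - Δ ∈ gkmCohom8 src tgt w := Submodule.sub_mem _ hGc (hSN hΔS)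
        have hnewcard : (Finset.univ \ insert u Sf : Finset V).card < n := by
          have h1 : (Finset.univ \ insert u Sf : Finset V) = (Finset.univ \ Sf).erase u := by
            ext y
            simp only [Finset.mem_sdiff, Finset.mem_erase, Finset.mem_insert, Finset.mem_univ,
              true_and]
            tauto
          rw [h1, ← hcard]
          exact Finset.card_erase_lt_of_mem (Finset.mem_sdiff.mpr ⟨Finset.mem_univ u, hu⟩)
        have hrec := IH _ hnewcard (insert u Sf) rfl ⟨u, Finset.mem_insert_self u Sf⟩
          (G - Δ) hGle (fun x => (hGh x).sub (hΔh x))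
          (by
            intro v hv
            rcases Finset.mem_insert.mp hv with rfl | hv'
            · show G v - Δ v = 0
              rw [hΔu]; ring
            · show G v - Δ v = 0
              rw [hGz v hv', hΔz v hv', sub_zero])
        have hGsum : G = (G - Δ) + Δ := by ring
        rw [hGsum]
        exact Submodule.add_mem _ hrec hΔS
      have hcardB3 : B.card ≤ 3 := by rw [← hval u]; exact Finset.card_le_card hBsub
      have hcardB1 : 1 ≤ B.card := Finset.card_pos.mpr hBne
      have hGu3 := hGh u
      rcases (show B.card = 1 ∨ B.card = 2 ∨ B.card = 3 by omega) with hc1 | hc2 | hc3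
      · -- one edge into the killed region
        obtain ⟨f, hBf⟩ := Finset.card_eq_one.mp hc1
        have hfB : f ∈ B := by rw [hBf]; exact Finset.mem_singleton_self f
        have hfE : f ∈ edgesAt8 src tgt u := hBsub hfB
        have hOcard : ((edgesAt8 src tgt u) \ B).card = 2 := by
          rw [Finset.card_sdiff_of_subset hBsub, hval u, hc1]
        obtain ⟨a, b, hab, hO2⟩ := Finset.card_eq_two.mp hOcard
        have haO : a ∈ (edgesAt8 src tgt u) \ B := by rw [hO2]; simp
        have hbO : b ∈ (edgesAt8 src tgt u) \ B := by rw [hO2]; simp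
        have haE : a ∈ edgesAt8 src tgt u := (Finset.mem_sdiff.mp haO).1
        have haB : a ∉ B := (Finset.mem_sdiff.mp haO).2
        have hbE : b ∈ edgesAt8 src tgt u := (Finset.mem_sdiff.mp hbO).1
        have hbB : b ∉ B := (Finset.mem_sdiff.mp hbO).2
        have hfa : f ≠ a := fun h => haB (by rw [← h]; exact hfB)
        have hfb : f ≠ b := fun h => hbB (by rw [← h]; exact hfB)
        have hcfab : ({f, a, b} : Finset E).card = 3 := by
          rw [Finset.card_insert_of_notMem (by simp [hfa, hfb]),
            Finset.card_insert_of_notMem (by simp [hab]), Finset.card_singleton]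
        have hE3 : edgesAt8 src tgt u = {f, a, b} := by
          refine (Finset.eq_of_subset_of_card_le ?_ ?_).symm
          · intro g hg
            rcases Finset.mem_insert.mp hg with rfl | hg'
            · exact hfE
            · rcases Finset.mem_insert.mp hg' with rfl | hg''
              · exact haE
              · rw [Finset.mem_singleton.mp hg'']; exact hbE
          · rw [hval u, hcfab]
        have heraseA : (edgesAt8 src tgt u).erase a = {f, b} := by
          rw [hE3]
          ext g
          simp only [Finset.mem_erase, Finset.mem_insert, Finset.mem_singleton]
          constructor
          · rintro ⟨hga, rfl | rfl | rfl⟩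
            · exact Or.inl rfl
            · exact absurd rfl hga
            · exact Or.inr rfl
          · rintro (rfl | rfl)
            · exact ⟨hfa.symm ∘ Eq.symm, Or.inl rfl⟩
            · exact ⟨Ne.symm hab, Or.inr (Or.inr rfl)⟩
        have heraseB : (edgesAt8 src tgt u).erase b = {f, a} := by
          rw [hE3]
          ext g
          simp only [Finset.mem_erase, Finset.mem_insert, Finset.mem_singleton]
          constructor
          · rintro ⟨hgb, rfl | rfl | rfl⟩
            · exact Or.inl rfl
            · exact Or.inr rfl
            · exact absurd rfl hgb
          · rintro (rfl | rfl)
            · exact ⟨hfb.symm ∘ Eq.symm, Or.inl rfl⟩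
            · exact ⟨hab, Or.inr (Or.inl rfl)⟩
        have hdvdf : w f ∣ G u := hdvdB f hfB
        obtain ⟨Q, hQh, hQz⟩ := div_homog hGu3 (hhom f) hdvdf
        have hQ2 : Q.IsHomogeneous 2 := by simpa using hQh
        obtain ⟨-, -, -, -, -, -, -, γ₁, γ₂, δ₁, δ₂, hX0ab, hX1ab⟩ :=
          pair_equiv (hhom a) (hhom b) (hindep u a b haE hbE hab)
        obtain ⟨A1, B1, hA1, hB1, hQsplit⟩ := hsplit (n := 1) hQ2
        have hPah : (C γ₁ * A1 + C δ₁ * B1).IsHomogeneous 1 := by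
          refine MvPolynomial.IsHomogeneous.add ?_ ?_
          · simpa using (isHomogeneous_C (Fin 2) γ₁).mul hA1
          · simpa using (isHomogeneous_C (Fin 2) δ₁).mul hB1
        have hPbh : (C γ₂ * A1 + C δ₂ * B1).IsHomogeneous 1 := by
          refine MvPolynomial.IsHomogeneous.add ?_ ?_
          · simpa using (isHomogeneous_C (Fin 2) γ₂).mul hA1
          · simpa using (isHomogeneous_C (Fin 2) δ₂).mul hB1
        have hQrepr : Q = (C γ₁ * A1 + C δ₁ * B1) * w a + (C γ₂ * A1 + C δ₂ * B1) * w b := by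
          rw [hQsplit, hX0ab, hX1ab]; ring
        obtain ⟨ca, hca0, hThaU⟩ := hThval a u (hmemE a haE)
        obtain ⟨cb, hcb0, hThbU⟩ := hThval b u (hmemE b hbE)
        refine ⟨((C γ₂ * A1 + C δ₂ * B1) * C ca⁻¹) • Th a
              + ((C γ₁ * A1 + C δ₁ * B1) * C cb⁻¹) • Th b, ?_, ?_, ?_, ?_⟩
        · refine Submodule.add_mem _ ?_ ?_
          · exact Submodule.smul_mem_smul
              (Ideal.mul_mem_right _ _ (homog_succ_mem (n := 0) hPbh)) (hThH a)
          · exact Submodule.smul_mem_smul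
              (Ideal.mul_mem_right _ _ (homog_succ_mem (n := 0) hPah)) (hThH b)
        · intro x
          show (((C γ₂ * A1 + C δ₂ * B1) * C ca⁻¹) * Th a x
            + ((C γ₁ * A1 + C δ₁ * B1) * C cb⁻¹) * Th b x).IsHomogeneous 3
          refine MvPolynomial.IsHomogeneous.add ?_ ?_
          · simpa using (hPbh.mul (isHomogeneous_C (Fin 2) ca⁻¹)).mul (hThhom a x)
          · simpa using (hPah.mul (isHomogeneous_C (Fin 2) cb⁻¹)).mul (hThhom b x)
        · intro s' hs'
          show ((C γ₂ * A1 + C δ₂ * B1) * C ca⁻¹) * Th a s'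
            + ((C γ₁ * A1 + C δ₁ * B1) * C cb⁻¹) * Th b s' = 0
          rw [hThzS a haE haB s' hs', hThzS b hbE hbB s' hs', mul_zero, mul_zero, add_zero]
        · show ((C γ₂ * A1 + C δ₂ * B1) * C ca⁻¹) * Th a u
            + ((C γ₁ * A1 + C δ₁ * B1) * C cb⁻¹) * Th b u = G u
          rw [hThaU, hThbU, heraseA, heraseB, Finset.prod_pair hfb, Finset.prod_pair hfa,
            hQz, hQrepr]
          have hcaa : (C ca⁻¹ : P2) * C ca = 1 := by
            rw [← C_mul, inv_mul_cancel₀ hca0, C_1]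
          have hcbb : (C cb⁻¹ : P2) * C cb = 1 := by
            rw [← C_mul, inv_mul_cancel₀ hcb0, C_1]
          calc ((C γ₂ * A1 + C δ₂ * B1) * C ca⁻¹) * (C ca * (w f * w b))
                + ((C γ₁ * A1 + C δ₁ * B1) * C cb⁻¹) * (C cb * (w f * w a))
              = (C ca⁻¹ * C ca) * ((C γ₂ * A1 + C δ₂ * B1) * (w f * w b))
                + (C cb⁻¹ * C cb) * ((C γ₁ * A1 + C δ₁ * B1) * (w f * w a)) := by ring
            _ = w f * ((C γ₁ * A1 + C δ₁ * B1) * w a + (C γ₂ * A1 + C δ₂ * B1) * w b) := by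
                rw [hcaa, hcbb]; ring
      · -- two edges into the killed region
        obtain ⟨f₁, f₂, hf12, hB2⟩ := Finset.card_eq_two.mp hc2
        have hm1 : f₁ ∈ B := by rw [hB2]; simp
        have hm2 : f₂ ∈ B := by rw [hB2]; simp
        have hf1E : f₁ ∈ edgesAt8 src tgt u := hBsub hm1
        have hf2E : f₂ ∈ edgesAt8 src tgt u := hBsub hm2
        have hOcard : ((edgesAt8 src tgt u) \ B).card = 1 := by
          rw [Finset.card_sdiff_of_subset hBsub, hval u, hc2]
        obtain ⟨a, hO1⟩ := Finset.card_eq_one.mp hOcard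
        have haO : a ∈ (edgesAt8 src tgt u) \ B := by rw [hO1]; simp
        have haE : a ∈ edgesAt8 src tgt u := (Finset.mem_sdiff.mp haO).1
        have haB : a ∉ B := (Finset.mem_sdiff.mp haO).2
        have herase : (edgesAt8 src tgt u).erase a = B := by
          refine (Finset.eq_of_subset_of_card_le ?_ ?_).symm
          · intro g hg
            exact Finset.mem_erase.mpr ⟨fun h => haB (by rw [← h]; exact hg), hBsub hg⟩
          · rw [Finset.card_erase_of_mem haE, hval u, hc2]
        have hdvd12 : w f₁ * w f₂ ∣ G u :=
          dvd_pair (hhom f₁) (hhom f₂) (hindep u f₁ f₂ hf1E hf2E hf12)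
            (hdvdB f₁ hm1) (hdvdB f₂ hm2)
        have hw2 : (w f₁ * w f₂).IsHomogeneous 2 := by
          simpa using (hhom f₁).mul (hhom f₂)
        obtain ⟨t, hth, htz⟩ := div_homog hGu3 hw2 hdvd12
        have hth1 : t.IsHomogeneous 1 := by simpa using hth
        obtain ⟨ca, hca0, hThaU⟩ := hThval a u (hmemE a haE)
        refine ⟨(t * C ca⁻¹) • Th a, ?_, ?_, ?_, ?_⟩
        · exact Submodule.smul_mem_smul
            (Ideal.mul_mem_right _ _ (homog_succ_mem (n := 0) hth1)) (hThH a)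
        · intro x
          show ((t * C ca⁻¹) * Th a x).IsHomogeneous 3
          simpa using (hth1.mul (isHomogeneous_C (Fin 2) ca⁻¹)).mul (hThhom a x)
        · intro s' hs'
          show (t * C ca⁻¹) * Th a s' = 0
          rw [hThzS a haE haB s' hs', mul_zero]
        · show (t * C ca⁻¹) * Th a u = G u
          rw [hThaU, herase, hB2, Finset.prod_pair hf12, htz]
          have hcaa : (C ca⁻¹ : P2) * C ca = 1 := by
            rw [← C_mul, inv_mul_cancel₀ hca0, C_1]
          calc (t * C ca⁻¹) * (C ca * (w f₁ * w f₂))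
              = (C ca⁻¹ * C ca) * (w f₁ * w f₂ * t) := by ring
            _ = w f₁ * w f₂ * t := by rw [hcaa, one_mul]
      · -- all three edges into the killed region
        have hBeqE : B = edgesAt8 src tgt u :=
          Finset.eq_of_subset_of_card_le hBsub (by rw [hval u, hc3])
        obtain ⟨e₁, e₂, e₃, h12, h13, h23, hB3⟩ := Finset.card_eq_three.mp hc3
        have hm1 : e₁ ∈ B := by rw [hB3]; simp
        have hm2 : e₂ ∈ B := by rw [hB3]; simp
        have hm3 : e₃ ∈ B := by rw [hB3]; simp
        have hE1 : e₁ ∈ edgesAt8 src tgt u := hBsub hm1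
        have hE2 : e₂ ∈ edgesAt8 src tgt u := hBsub hm2
        have hE3' : e₃ ∈ edgesAt8 src tgt u := hBsub hm3
        have hdvd : w e₁ * w e₂ * w e₃ ∣ G u :=
          dvd_triple (hhom e₁) (hhom e₂) (hhom e₃)
            (hindep u e₁ e₂ hE1 hE2 h12)
            (hindep u e₃ e₁ hE3' hE1 (Ne.symm h13))
            (hindep u e₃ e₂ hE3' hE2 (Ne.symm h23))
            (hdvdB e₁ hm1) (hdvdB e₂ hm2) (hdvdB e₃ hm3)
        have hw3 : (w e₁ * w e₂ * w e₃).IsHomogeneous 3 := by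
          simpa using ((hhom e₁).mul (hhom e₂)).mul (hhom e₃)
        obtain ⟨t, hth, htz⟩ := div_homog hGu3 hw3 hdvd
        obtain ⟨lam, rfl⟩ := homog0 (by simpa using hth)
        have hprodE : ∏ g ∈ edgesAt8 src tgt u, w g = w e₁ * (w e₂ * w e₃) := by
          rw [← hBeqE, hB3, Finset.prod_insert (by simp [h12, h13]),
            Finset.prod_insert (by simp [h23]), Finset.prod_singleton]
        refine ⟨C lam • vThom8 src tgt w (fun _ => 1) u,
          Submodule.smul_mem _ _ (hT u), ?_, ?_, ?_⟩
        · intro x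
          show (C lam * vThom8 src tgt w (fun _ => 1) u x).IsHomogeneous 3
          rw [vThom_one_apply]
          by_cases hx : x = u
          · rw [if_pos hx]
            simpa using (isHomogeneous_C (Fin 2) lam).mul (hprodv u)
          · rw [if_neg hx, mul_zero]
            exact isHomogeneous_zero _ _ _
        · intro s' hs'
          show C lam * vThom8 src tgt w (fun _ => 1) u s' = 0
          rw [vThom_one_apply, if_neg (fun hh => hu (by rw [← hh]; exact hs')), mul_zero]
        · show C lam * vThom8 src tgt w (fun _ => 1) u u = G u
          rw [vThom_one_apply, if_pos rfl, hprodE, htz]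
          ring
  intro F hFc hFh
  rcases isEmpty_or_nonempty V with hV | hV
  · have hF0 : F = 0 := funext fun v => (hV.false v).elim
    rw [hF0]; exact Submodule.zero_mem _
  · obtain ⟨v₀⟩ := hV
    have h1N : (fun _ : V => (1 : P2)) ∈ gkmCohom8 src tgt w := by
      intro e; simp
    have hconstS : (F v₀) • (fun _ : V => (1 : P2)) ∈ RplusH8 src tgt w :=
      Submodule.smul_mem_smul (homog_succ_mem (n := 2) (hFh v₀)) h1N
    have hG : F - (F v₀) • (fun _ : V => (1 : P2)) ∈ RplusH8 src tgt w := by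
      refine main _ {v₀} rfl ⟨v₀, Finset.mem_singleton_self v₀⟩ _
        (Submodule.sub_mem _ hFc (hSN hconstS)) ?_ ?_
      · intro x
        show (F x - F v₀ * 1).IsHomogeneous 3
        rw [mul_one]
        exact (hFh x).sub (hFh v₀)
      · intro v hv
        rw [Finset.mem_singleton] at hv
        subst hv
        show F v - F v * 1 = 0
        rw [mul_one, sub_self]
    have hFsum : F = (F - (F v₀) • (fun _ : V => (1 : P2)))
        + (F v₀) • (fun _ : V => (1 : P2)) := by ring
    rw [hFsum]
    exact Submodule.add_mem _ hG hconstS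

end Graph

end Stmt8Aux

/-- Let `(Γ,α)` be a 3-valent abstract GKM graph with labels in `ℤ²`.
(a) If `(Γ,α)` is not orientable (no sign choice satisfies the orientability condition),
then every vertex Thom class vanishes in the top degree graph cohomology
`H⁶(Γ,α;ℚ)`, i.e. lies in `R⁺·H*_T(Γ,α;ℚ)`.
(b) Consequently, if `H*(Γ,α;ℚ)` satisfies 6-dimensional Poincaré duality, then
`(Γ,α)` is orientable.  Here `η` is tied to the graph cohomology by the relation
`Th_v - η(e)·Th_w ∈ R⁺·H*_T` for every edge `e` from `v` to `w` (for each choice of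
signs `s`), coming from `α(e)·Th_e = Th_v - η(e)·Th_w`. -/
theorem stmt8 {V E : Type} [Fintype V] [Fintype E] [DecidableEq V] [DecidableEq E]
    (src tgt : E → V) (hst : ∀ e, src e ≠ tgt e)
    (w : E → MvPolynomial (Fin 2) ℚ)
    (hhom : ∀ e, (w e).IsHomogeneous 1)
    (hval : ∀ v, (edgesAt8 src tgt v).card = 3)
    (hindep : ∀ (v : V) (e f : E), e ∈ edgesAt8 src tgt v → f ∈ edgesAt8 src tgt v →
      e ≠ f → ∀ c d : ℚ, C c * w e + C d * w f = 0 → c = 0 ∧ d = 0)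
    (hconn : ∀ a b : V, Relation.ReflTransGen
      (fun x y => ∃ e, (src e = x ∧ tgt e = y) ∨ (src e = y ∧ tgt e = x)) a b)
    -- the Thom classes of the oriented edges (built from a compatible connection)
    (Th : E → V → MvPolynomial (Fin 2) ℚ)
    (hThH : ∀ e, Th e ∈ gkmCohom8 src tgt w)
    (hThsupp : ∀ e u, u ≠ src e → u ≠ tgt e → Th e u = 0)
    (hThval : ∀ e u, u = src e ∨ u = tgt e → ∃ c : ℚ, c ≠ 0 ∧
      Th e u = C c * ∏ g ∈ (edgesAt8 src tgt u).erase e, w g)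
    (hThhom : ∀ e u, (Th e u).IsHomogeneous 2)
    -- `η` and its relation to the vertex Thom classes
    (η : (E → ℤˣ) → E → ℤˣ)
    (hrel : ∀ (s : E → ℤˣ) (e : E),
      vThom8 src tgt w s (src e) - ((η s e : ℤ)) • vThom8 src tgt w s (tgt e) ∈
        RplusH8 src tgt w) :
    -- (a) non-orientability kills the vertex Thom classes over ℚ
    ((∀ s : E → ℤˣ, ¬ orientCond8 src tgt η s) →
      ∀ (s : E → ℤˣ) (v : V), vThom8 src tgt w s v ∈ RplusH8 src tgt w) ∧
    -- (b) Poincaré duality implies orientability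
    ((∃ f, f ∈ gkmGr8 src tgt w 3 ∧ f ∉ RplusH8 src tgt w) →
     (∀ f g, f ∈ gkmGr8 src tgt w 3 → g ∈ gkmGr8 src tgt w 3 →
        ∃ a b : ℚ, ¬(a = 0 ∧ b = 0) ∧ a • f + b • g ∈ RplusH8 src tgt w) →
     (∀ n : ℕ, n ≤ 3 → ∀ f, f ∈ gkmGr8 src tgt w n → f ∉ RplusH8 src tgt w →
        ∃ g, g ∈ gkmGr8 src tgt w (3 - n) ∧ f * g ∉ RplusH8 src tgt w) →
     ∃ s : E → ℤˣ, orientCond8 src tgt η s) := by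
  classical
  open Fin.NatCast in
  have key : ∀ (s : E → ℤˣ), ¬ orientCond8 src tgt η s →
      ∀ v, vThom8 src tgt w s v ∈ RplusH8 src tgt w := by
    intro s hns
    rw [orientCond8] at hns
    push_neg at hns
    obtain ⟨m, es, vs, hpath, hprod⟩ := hns
    have hstep : ∀ i : Fin (m+1),
        vThom8 src tgt w s (vs i) - ((η s (es i) : ℤ)) • vThom8 src tgt w s (vs (i+1))
          ∈ RplusH8 src tgt w := by
      intro i
      rcases hpath i with ⟨h1, h2⟩ | ⟨h1, h2⟩
      · have h := hrel s (es i); rw [h1, h2] at h; exact h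
      · have h := hrel s (es i); rw [h1, h2] at h
        exact Stmt8Aux.flip_mem h
    have htel : ∀ j : ℕ,
        vThom8 src tgt w s (vs 0) -
          (∏ i ∈ Finset.range j, ((η s (es ((i : ℕ) : Fin (m+1)))) : ℤ)) •
            vThom8 src tgt w s (vs ((j : ℕ) : Fin (m+1))) ∈ RplusH8 src tgt w := by
      intro j
      induction j with
      | zero =>
        rw [Finset.prod_range_zero, Nat.cast_zero, one_smul, sub_self]
        exact Submodule.zero_mem _
      | succ j IHj =>
        have hs := hstep ((j : ℕ) : Fin (m+1))
        have hcomb := Submodule.add_mem _ IHj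
          (Stmt8Aux.zsmul_mem'' _ (∏ i ∈ Finset.range j, ((η s (es ((i : ℕ) : Fin (m+1)))) : ℤ)) hs)
        have hcast : (((j+1 : ℕ)) : Fin (m+1)) = ((j : ℕ) : Fin (m+1)) + 1 := by push_cast; ring
        rw [Finset.prod_range_succ, hcast]
        convert hcomb using 1
        rw [smul_sub, smul_smul]
        abel
    have hfin := htel (m+1)
    rw [Fin.natCast_self] at hfin
    have hcoe : (∏ i ∈ Finset.range (m+1), ((η s (es ((i : ℕ) : Fin (m+1)))) : ℤ))
        = ((∏ i : Fin (m+1), η s (es i) : ℤˣ) : ℤ) := by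
      rw [← Fin.prod_univ_eq_prod_range (fun k => ((η s (es ((k : ℕ) : Fin (m+1)))) : ℤ)) (m+1)]
      rw [← Units.coeHom_apply, map_prod]
      simp [Fin.cast_val_eq_self]
    rcases Int.units_eq_one_or (∏ i : Fin (m+1), η s (es i)) with h1 | h1
    · exact absurd h1 hprod
    · rw [hcoe, h1] at hfin
      have hT0 : vThom8 src tgt w s (vs 0) ∈ RplusH8 src tgt w := by
        have h2 : vThom8 src tgt w s (vs 0) + vThom8 src tgt w s (vs 0)
            ∈ RplusH8 src tgt w := by
          simpa [Units.val_neg, Units.val_one, neg_smul, one_smul, sub_neg_eq_add] using hfin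
        have h3 : vThom8 src tgt w s (vs 0)
            = (C (1/2 : ℚ) : MvPolynomial (Fin 2) ℚ) •
              (vThom8 src tgt w s (vs 0) + vThom8 src tgt w s (vs 0)) := by
          rw [smul_add, ← add_smul, ← C_add]
          norm_num
        rw [h3]
        exact Submodule.smul_mem _ _ h2
      intro v
      have hmove : ∀ x y : V, (∃ e, (src e = x ∧ tgt e = y) ∨ (src e = y ∧ tgt e = x)) →
          vThom8 src tgt w s x ∈ RplusH8 src tgt w →
          vThom8 src tgt w s y ∈ RplusH8 src tgt w := by
        rintro x y ⟨e, he⟩ hx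
        rcases he with ⟨h1, h2⟩ | ⟨h1, h2⟩
        · have h := hrel s e; rw [h1, h2] at h
          have h4 := Stmt8Aux.flip_mem h
          have h5 := Submodule.add_mem _ h4 (Stmt8Aux.zsmul_mem'' _ ((η s e : ℤ)) hx)
          simpa [sub_add_cancel] using h5
        · have h := hrel s e; rw [h1, h2] at h
          have h5 := Submodule.add_mem _ h (Stmt8Aux.zsmul_mem'' _ ((η s e : ℤ)) hx)
          simpa [sub_add_cancel] using h5
      have hpropa : ∀ x y : V, Relation.ReflTransGen
          (fun x y => ∃ e, (src e = x ∧ tgt e = y) ∨ (src e = y ∧ tgt e = x)) x y →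
          vThom8 src tgt w s x ∈ RplusH8 src tgt w →
          vThom8 src tgt w s y ∈ RplusH8 src tgt w := by
        intro x y h
        induction h with
        | refl => exact id
        | tail hab hbc IH => exact fun hx => hmove _ _ hbc (IH hx)
      exact hpropa (vs 0) v (hconn (vs 0) v) hT0
  constructor
  · intro hall s v
    exact key s (hall s) v
  · intro h1 _h2 _h3
    by_contra hno
    push_neg at hno
    obtain ⟨F, hFmem, hFnot⟩ := h1
    exact hFnot (Stmt8Aux.kill src tgt w hst hhom hval hindep hconn Th hThH hThsupp hThval hThhom
      (fun v => key _ (hno _) v) F hFmem.1 hFmem.2)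

end
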